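/- Let β = 0.9·exp(iπ/16) and α' = 0.025. Every root of the cubic p(x) = x(Re(β)(iα' − 2) − |β|²) + x²(2Re(β) − iα' + 1) + |β|² − x³ has modulus strictly less than 1 (in fact at most ≈0.973). -/

import Mathlib

/-!
The monic cubic differs from `(x - ρ₁)(x - ρ₂)(x - ρ₃)`, for three explicit points `ρᵢ` of
modulus at most `r = 0.973`, by a quadratic whose coefficients have total size below `(1 - r)³`.
For `‖x‖ ≥ 1` each factor `‖x - ρᵢ‖` is at least `(1 - r)‖x‖`, so the product dominates that
quadratic and `x` cannot be a root. The only transcendental input is `cos (π / 16)` to six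
decimals, from its nested radical.
-/

lemma one_sub_mul_norm_le_norm_sub {E : Type*} [SeminormedAddCommGroup E] {x ρ : E} {r : ℝ}
    (hρ : ‖ρ‖ ≤ r) (hx : 1 ≤ ‖x‖) :
    (1 - r) * ‖x‖ ≤ ‖x - ρ‖ := by
  nlinarith [norm_sub_norm_le x ρ, norm_nonneg ρ]

section NormedField

variable {𝕜 : Type*} [NormedField 𝕜]

lemma norm_quadratic_le {x e₀ e₁ e₂ : 𝕜} (hx : 1 ≤ ‖x‖) :
    ‖e₂ * x ^ 2 + e₁ * x + e₀‖ ≤ (‖e₂‖ + ‖e₁‖ + ‖e₀‖) * ‖x‖ ^ 2 := by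
  refine norm_add₃_le.trans ?_
  rw [norm_mul, norm_mul, norm_pow]
  have hx₂ : ‖x‖ ≤ ‖x‖ ^ 2 := by nlinarith
  have h₁ := mul_le_mul_of_nonneg_left hx₂ (norm_nonneg e₁)
  have h₀ := mul_le_mul_of_nonneg_left (hx.trans hx₂) (norm_nonneg e₀)
  linarith

theorem norm_lt_one_of_cubic_near_product {x ρ₁ ρ₂ ρ₃ s₁ s₂ s₃ : 𝕜} {r : ℝ}
    (hx : x ^ 3 - s₁ * x ^ 2 + s₂ * x - s₃ = 0)
    (h₁ : ‖ρ₁‖ ≤ r) (h₂ : ‖ρ₂‖ ≤ r) (h₃ : ‖ρ₃‖ ≤ r)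
    (hs : ‖ρ₁ + ρ₂ + ρ₃ - s₁‖ + ‖ρ₁ * ρ₂ + ρ₁ * ρ₃ + ρ₂ * ρ₃ - s₂‖ + ‖ρ₁ * ρ₂ * ρ₃ - s₃‖
      < (1 - r) ^ 3) :
    ‖x‖ < 1 := by
  by_contra! hx₁
  set ε := ‖ρ₁ + ρ₂ + ρ₃ - s₁‖ + ‖ρ₁ * ρ₂ + ρ₁ * ρ₃ + ρ₂ * ρ₃ - s₂‖ + ‖ρ₁ * ρ₂ * ρ₃ - s₃‖
  have hr : 0 < 1 - r := (Odd.pow_pos_iff (by decide)).1 ((by positivity : 0 ≤ ε).trans_lt hs)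
  have hfactor : (x - ρ₁) * (x - ρ₂) * (x - ρ₃) = -(ρ₁ + ρ₂ + ρ₃ - s₁) * x ^ 2
      + (ρ₁ * ρ₂ + ρ₁ * ρ₃ + ρ₂ * ρ₃ - s₂) * x + -(ρ₁ * ρ₂ * ρ₃ - s₃) := by
    linear_combination hx
  have hlower : ((1 - r) * ‖x‖) ^ 3 ≤ ‖(x - ρ₁) * (x - ρ₂) * (x - ρ₃)‖ := by
    have hr' : 0 ≤ (1 - r) * ‖x‖ := by positivity
    rw [norm_mul, norm_mul, pow_three, ← mul_assoc]
    gcongr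
    exacts [one_sub_mul_norm_le_norm_sub h₁ hx₁, one_sub_mul_norm_le_norm_sub h₂ hx₁,
      one_sub_mul_norm_le_norm_sub h₃ hx₁]
  have hupper : ‖(x - ρ₁) * (x - ρ₂) * (x - ρ₃)‖ ≤ ε * ‖x‖ ^ 2 := by
    rw [hfactor]
    exact (norm_quadratic_le hx₁).trans_eq (by simp only [norm_neg, ε])
  have hgrow : (1 - r) ^ 3 * ‖x‖ ^ 2 ≤ ε * ‖x‖ ^ 2 :=
    calc (1 - r) ^ 3 * ‖x‖ ^ 2 ≤ ((1 - r) * ‖x‖) ^ 3 := by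
          rw [mul_pow]; gcongr; norm_num
      _ ≤ ε * ‖x‖ ^ 2 := hlower.trans hupper
  exact hs.not_ge (le_of_mul_le_mul_right hgrow (by positivity))

end NormedField

open Real in
lemma cos_pi_div_sixteen_mem_Ioo : cos (π / 16) ∈ Set.Ioo 0.980785 0.980786 := by
  have h₂ : √2 ∈ Set.Ioo 1.4142135 1.4142136 :=
    ⟨(lt_sqrt (by norm_num)).2 (by norm_num), (sqrt_lt' (by norm_num)).2 (by norm_num)⟩
  have h₄ : √(2 + √2) ∈ Set.Ioo 1.847759 1.8477591 :=
    ⟨(lt_sqrt (by norm_num)).2 (by norm_num; linarith [h₂.1]),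
      (sqrt_lt' (by norm_num)).2 (by norm_num; linarith [h₂.2])⟩
  have h₈ : √(2 + √(2 + √2)) ∈ Set.Ioo 1.9615705 1.9615706 :=
    ⟨(lt_sqrt (by norm_num)).2 (by norm_num; linarith [h₄.1]),
      (sqrt_lt' (by norm_num)).2 (by norm_num; linarith [h₄.2])⟩
  rw [cos_pi_div_sixteen]
  constructor <;> linarith [h₈.1, h₈.2]

open Complex

lemma re_ofReal_mul_exp_I_mul (r θ : ℝ) : ((r : ℂ) * exp (I * θ)).re = r * Real.cos θ := by
  rw [mul_comm I, re_ofReal_mul, exp_ofReal_mul_I_re]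

lemma norm_ofReal_mul_exp_I_mul {r : ℝ} (hr : 0 ≤ r) (θ : ℝ) : ‖(r : ℂ) * exp (I * θ)‖ = r := by
  rw [mul_comm I, norm_mul, norm_exp_ofReal_mul_I, mul_one, norm_real, Real.norm_of_nonneg hr]

-- The roots of the cubic to five decimals, last digits chosen to minimise the defect below.
def approxRoot₁ : ℂ := 0.97035 - 0.07067 * I
def approxRoot₂ : ℂ := 0.83995 + 0.19202 * I
def approxRoot₃ : ℂ := 0.95511 - 0.14635 * I

lemma norm_approxRoot_le :
    ‖approxRoot₁‖ ≤ 0.973 ∧ ‖approxRoot₂‖ ≤ 0.973 ∧ ‖approxRoot₃‖ ≤ 0.973 := by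
  simp only [norm_def, Real.sqrt_le_left (by norm_num : (0 : ℝ) ≤ 0.973), normSq_apply]
  norm_num [approxRoot₁, approxRoot₂, approxRoot₃]

lemma approxRoots_defect_lt {C : ℝ} (hC : C ∈ Set.Ioo 0.980785 0.980786) :
    let b : ℂ := (0.9 * C : ℝ)
    ‖approxRoot₁ + approxRoot₂ + approxRoot₃ - (2 * b + 1 - 0.025 * I)‖
      + ‖approxRoot₁ * approxRoot₂ + approxRoot₁ * approxRoot₃ + approxRoot₂ * approxRoot₃
          - (2 * b + 0.81 - 0.025 * I * b)‖
      + ‖approxRoot₁ * approxRoot₂ * approxRoot₃ - 0.81‖ < (1 - 0.973) ^ 3 := by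
  intro b
  obtain ⟨hC₁, hC₂⟩ := hC
  refine lt_of_le_of_lt (add_le_add (add_le_add (norm_le_abs_re_add_abs_im _)
    (norm_le_abs_re_add_abs_im _)) (norm_le_abs_re_add_abs_im _)) ?_
  simp only [b, approxRoot₁, approxRoot₂, approxRoot₃, add_re, sub_re, mul_re, add_im, sub_im,
    mul_im, ofReal_re, ofReal_im, I_re, I_im, one_re, one_im, re_ofNat, im_ofNat, re_ofScientific,
    im_ofScientific]
  norm_num
  rw [abs_of_neg (by linarith), abs_of_neg (by linarith), abs_of_pos (by linarith)]
  linarith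

open Complex in
theorem roots_in_unit_disk_pos_phase :
    ∀ x : ℂ,
      (let β : ℂ := (0.9 : ℂ) * Complex.exp (I * ((Real.pi / 16 : ℝ) : ℂ));
       let α' : ℂ := (0.025 : ℂ);
       x * ((β.re : ℂ) * (I * α' - 2) - (‖β‖ : ℂ) ^ 2)
         + x ^ 2 * (2 * β.re - I * α' + 1) + (‖β‖ : ℂ) ^ 2 - x ^ 3) = 0 →
      ‖x‖ < 1 := by
  intro x hx
  dsimp only at hx
  rw [show (0.9 : ℂ) = ((0.9 : ℝ) : ℂ) by norm_num, re_ofReal_mul_exp_I_mul,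
    norm_ofReal_mul_exp_I_mul (by norm_num)] at hx
  obtain ⟨h₁, h₂, h₃⟩ := norm_approxRoot_le
  refine norm_lt_one_of_cubic_near_product ?_ h₁ h₂ h₃
    (approxRoots_defect_lt cos_pi_div_sixteen_mem_Ioo)
  push_cast at hx ⊢
  linear_combination -hx
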